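/- arXiv:1904.02905 — 3 statements merged into one kernel-verified Lean document; each statement's English description precedes it below -/
import Mathlib

section
/- Let T be a set with pseudometric d, and R: T → ℕ a function. For X in T define the hierarchical stabilization R̂_d(X): [0,∞) → [0,∞) by R̂_d(X)(t) = min{R(Y) | d(X,Y) ≤ t}. Then for any X, Y in T and t ∈ [0,∞): R̂_d(Y)(t) ≥ R̂_d(X)(t + d(X,Y)), i.e., the interleaving distance between R̂_d(X) and R̂_d(Y) is at most d(X,Y). -/
open scoped NNReal ENNReal

/-- Hierarchical stabilization of a discrete invariant `R` with respect to a
pseudometric `d`: `hatR d R X t` is the minimum of `R` on the disk of radius `t`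
around `X`. -/
noncomputable def hatR {T : Type*} (d : T → T → ℝ≥0∞) (R : T → ℕ) (X : T) (t : ℝ≥0∞) : ℕ :=
  sInf (R '' {Y | d X Y ≤ t})

/-- The hierarchical stabilization is 1-Lipschitz: for all `X Y` and `t ∈ [0,∞)`,
`R̂_d(Y)(t) ≥ R̂_d(X)(t + d(X,Y))`, i.e. the interleaving distance between
`R̂_d(X)` and `R̂_d(Y)` is at most `d(X,Y)`. -/
theorem stmt0 {T : Type*} (d : T → T → ℝ≥0∞)
    (hrefl : ∀ X, d X X = 0)
    (hsymm : ∀ X Y, d X Y = d Y X)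
    (htri : ∀ X Y Z, d X Z ≤ d X Y + d Y Z)
    (R : T → ℕ) :
    ∀ (X Y : T) (t : ℝ≥0),
      hatR d R X ((t : ℝ≥0∞) + d X Y) ≤ hatR d R Y (t : ℝ≥0∞) := by
  intro X Y t
  have hne : (R '' {Z | d Y Z ≤ (t : ℝ≥0∞)}).Nonempty :=
    ⟨R Y, Y, by simp [hrefl], rfl⟩
  obtain ⟨Z, hZ, hZR⟩ := Nat.sInf_mem hne
  unfold hatR; rw [← hZR]
  apply Nat.sInf_le
  refine ⟨Z, ?_, rfl⟩
  calc d X Z ≤ d X Y + d Y Z := htri X Y Z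
    _ ≤ d X Y + t := by gcongr; exact hZ
    _ = t + d X Y := add_comm _ _
end

section
/- Let f, g: [0,∞) → [0,∞) be non-increasing functions and p ≥ 1 a real number. If ε ≥ 0 satisfies f(t) ≥ g(t+ε) and g(t) ≥ f(t+ε) for all t ∈ [0,∞), then (∫₀^∞ |f(t) - g(t)|^p dt)^(1/p) ≤ max{f(0), g(0)} · ε^(1/p). -/
open MeasureTheory Set ENNReal

lemma key_shift (Φ : ℝ → ℝ≥0∞) (hΦ : Antitone Φ) (C : ℝ≥0∞) (hC : C ≠ ⊤)
    (hb : ∀ t, Φ t ≤ C) (ε : ℝ) (hε : 0 ≤ ε) :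
    ∫⁻ t in Set.Ioi (0:ℝ), (Φ t - Φ (t + ε)) ≤ C * ENNReal.ofReal ε := by
  have hm : Measurable Φ := hΦ.measurable
  -- shift invariance on intervals
  have hshift : ∀ n : ℕ, ∫⁻ t in Set.Ioc (0:ℝ) n, Φ (t + ε)
      = ∫⁻ t in Set.Ioc (ε:ℝ) (n + ε), Φ t := by
    intro n
    have h1 : ∫⁻ t in Set.Ioc (0:ℝ) n, Φ (t + ε)
        = ∫⁻ t, (Set.Ioc (ε:ℝ) (n+ε)).indicator Φ (t + ε) := by
      rw [← lintegral_indicator measurableSet_Ioc]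
      congr 1
      ext t
      by_cases ht : t ∈ Set.Ioc (0:ℝ) (n:ℝ)
      · rw [Set.indicator_of_mem ht, Set.indicator_of_mem]
        exact ⟨by linarith [ht.1], by linarith [ht.2]⟩
      · rw [Set.indicator_of_notMem ht, Set.indicator_of_notMem]
        intro h
        exact ht ⟨by linarith [h.1], by linarith [h.2]⟩
    rw [h1, lintegral_add_right_eq_self _ ε, lintegral_indicator measurableSet_Ioc]
  -- per-interval bound
  have hn : ∀ n : ℕ, (∫⁻ t in Set.Ioc (0:ℝ) n, (Φ t - Φ (t + ε)))
      ≤ C * ENNReal.ofReal ε := by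
    intro n
    set B := ∫⁻ t in Set.Ioc (0:ℝ) n, Φ (t + ε) with hB
    have hBfin : B ≠ ⊤ := by
      have hle : B ≤ C * ENNReal.ofReal n :=
        calc B ≤ ∫⁻ _ in Set.Ioc (0:ℝ) n, C :=
              setLIntegral_mono' measurableSet_Ioc fun t _ => hb _
          _ = C * volume (Set.Ioc (0:ℝ) n) := setLIntegral_const _ _
          _ = C * ENNReal.ofReal n := by rw [Real.volume_Ioc, sub_zero]
      exact ne_top_of_le_ne_top (ENNReal.mul_ne_top hC ofReal_ne_top) hle
    have hadd : (∫⁻ t in Set.Ioc (0:ℝ) n, (Φ t - Φ (t + ε))) + B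
        = ∫⁻ t in Set.Ioc (0:ℝ) n, Φ t := by
      rw [hB, ← lintegral_add_right _ (show Measurable fun t : ℝ => Φ (t + ε) from hm.comp (measurable_add_const ε))]
      exact lintegral_congr fun t => tsub_add_cancel_of_le (hΦ (by linarith))
    have hA : (∫⁻ t in Set.Ioc (0:ℝ) n, Φ t) ≤ C * ENNReal.ofReal ε + B := by
      calc (∫⁻ t in Set.Ioc (0:ℝ) n, Φ t)
          ≤ ∫⁻ t in Set.Ioc (0:ℝ) ε ∪ Set.Ioc ε ((n:ℝ) + ε), Φ t := by
            apply lintegral_mono_set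
            intro t ht
            rcases le_or_gt t ε with h | h
            · exact Or.inl ⟨ht.1, h⟩
            · exact Or.inr ⟨h, by linarith [ht.2]⟩
        _ ≤ (∫⁻ t in Set.Ioc (0:ℝ) ε, Φ t) + ∫⁻ t in Set.Ioc ε ((n:ℝ) + ε), Φ t :=
            lintegral_union_le _ _ _
        _ ≤ C * ENNReal.ofReal ε + B := by
            apply add_le_add
            · calc (∫⁻ t in Set.Ioc (0:ℝ) ε, Φ t)
                  ≤ ∫⁻ _ in Set.Ioc (0:ℝ) ε, C :=
                    setLIntegral_mono' measurableSet_Ioc fun t _ => hb _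
                _ = C * volume (Set.Ioc (0:ℝ) ε) := setLIntegral_const _ _
                _ = C * ENNReal.ofReal ε := by rw [Real.volume_Ioc, sub_zero]
            · rw [hB, hshift n]
    rw [← ENNReal.add_le_add_iff_right hBfin, hadd]
    exact hA
  -- pass to the limit over Ioc 0 n ↑ Ioi 0
  have h1 : Set.Ioi (0:ℝ) = ⋃ n : ℕ, Set.Ioc (0:ℝ) n := by
    ext t
    simp only [Set.mem_Ioi, Set.mem_iUnion, Set.mem_Ioc]
    constructor
    · intro ht
      obtain ⟨n, hnt⟩ := exists_nat_ge t
      exact ⟨n, ht, hnt⟩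
    · rintro ⟨n, h, _⟩; exact h
  rw [h1, setLIntegral_iUnion_of_directed]
  · exact iSup_le hn
  · intro m k
    exact ⟨max m k, Set.Ioc_subset_Ioc_right (by exact_mod_cast le_max_left m k),
      Set.Ioc_subset_Ioc_right (by exact_mod_cast le_max_right m k)⟩

/-- If `f, g : [0,∞) → [0,∞)` are non-increasing and `ε`-interleaved
(`f(t) ≥ g(t+ε)` and `g(t) ≥ f(t+ε)` for all `t ≥ 0`), then for any real `p ≥ 1`,
`L_p(f,g) = (∫₀^∞ |f - g|^p)^(1/p) ≤ max{f(0), g(0)} · ε^(1/p)`. -/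
theorem stmt1 (f g : ℝ → ℝ)
    (hf0 : ∀ t, 0 ≤ t → 0 ≤ f t) (hg0 : ∀ t, 0 ≤ t → 0 ≤ g t)
    (hfa : AntitoneOn f (Set.Ici (0 : ℝ))) (hga : AntitoneOn g (Set.Ici (0 : ℝ)))
    (p : ℝ) (hp : 1 ≤ p)
    (ε : ℝ) (hε : 0 ≤ ε)
    (hint : ∀ t, 0 ≤ t → g (t + ε) ≤ f t ∧ f (t + ε) ≤ g t) :
    (∫⁻ t in Set.Ioi (0 : ℝ), ENNReal.ofReal (|f t - g t| ^ p)) ^ (1 / p) ≤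
      ENNReal.ofReal (max (f 0) (g 0)) * ENNReal.ofReal ε ^ (1 / p) := by
  have hp0 : 0 < p := lt_of_lt_of_le one_pos hp
  set M : ℝ := max (f 0) (g 0) with hM
  set h : ℝ → ℝ := fun t => max (f (max t 0)) (g (max t 0)) with hh
  have hha : Antitone h := by
    intro s t hst
    exact max_le_max
      (hfa (le_max_right s 0) (le_max_right t 0) (max_le_max hst le_rfl))
      (hga (le_max_right s 0) (le_max_right t 0) (max_le_max hst le_rfl))
  have hhM : ∀ t, h t ≤ M := by
    intro t
    refine max_le ?_ ?_
    · exact ((hfa (Set.mem_Ici.mpr le_rfl) (le_max_right t 0) (le_max_right t 0)).trans (le_max_left _ _))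
    · exact ((hga (Set.mem_Ici.mpr le_rfl) (le_max_right t 0) (le_max_right t 0)).trans (le_max_right _ _))
  set Φ : ℝ → ℝ≥0∞ := fun t => ENNReal.ofReal (h t) ^ p with hΦdef
  have hΦa : Antitone Φ := fun s t hst =>
    ENNReal.rpow_le_rpow (ENNReal.ofReal_le_ofReal (hha hst)) hp0.le
  have hΦb : ∀ t, Φ t ≤ ENNReal.ofReal M ^ p := fun t =>
    ENNReal.rpow_le_rpow (ENNReal.ofReal_le_ofReal (hhM t)) hp0.le
  have hCfin : (ENNReal.ofReal M) ^ p ≠ ⊤ :=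
    ENNReal.rpow_ne_top_of_nonneg hp0.le ofReal_ne_top
  -- pointwise bound
  have hpt : ∀ t ∈ Set.Ioi (0:ℝ), ENNReal.ofReal (|f t - g t| ^ p) ≤ Φ t - Φ (t + ε) := by
    intro t ht
    simp only [Set.mem_Ioi] at ht
    have ht0 : (0:ℝ) ≤ t := ht.le
    have hte : (0:ℝ) ≤ t + ε := by linarith
    set a : ℝ := min (f t) (g t) with ha
    set b : ℝ := max (f t) (g t) with hb
    have hab : a ≤ b := min_le_max
    have ha0 : 0 ≤ a := le_min (hf0 t ht0) (hg0 t ht0)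
    have habs : |f t - g t| = b - a := by
      rw [abs_sub_comm]; exact (max_sub_min_eq_abs (f t) (g t)).symm
    have hbh : b = h t := by simp [hb, hh, max_eq_left ht0]
    have hah : h (t + ε) ≤ a := by
      have hfe : f (t + ε) ≤ f t := hfa ht0 hte (by linarith)
      have hge : g (t + ε) ≤ g t := hga ht0 hte (by linarith)
      have : h (t + ε) = max (f (t + ε)) (g (t + ε)) := by
        simp [hh, max_eq_left hte]
      rw [this]
      exact max_le (le_min hfe (hint t ht0).2) (le_min (hint t ht0).1 hge)
    set A : ℝ≥0∞ := ENNReal.ofReal a with hA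
    set B : ℝ≥0∞ := ENNReal.ofReal b with hB
    have hABle : A ≤ B := ENNReal.ofReal_le_ofReal hab
    have step1 : ENNReal.ofReal (|f t - g t| ^ p) = (B - A) ^ p := by
      rw [habs, ← ENNReal.ofReal_rpow_of_nonneg (by linarith) hp0.le,
        ENNReal.ofReal_sub _ ha0]
    have step2 : (B - A) ^ p ≤ B ^ p - A ^ p := by
      apply ENNReal.le_sub_of_add_le_right (ENNReal.rpow_ne_top_of_nonneg hp0.le ofReal_ne_top)
      calc (B - A) ^ p + A ^ p ≤ ((B - A) + A) ^ p :=
            ENNReal.add_rpow_le_rpow_add _ _ hp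
        _ = B ^ p := by rw [tsub_add_cancel_of_le hABle]
    have step3 : B ^ p - A ^ p ≤ Φ t - Φ (t + ε) := by
      apply tsub_le_tsub
      · rw [hΦdef, hB, hbh]
      · exact ENNReal.rpow_le_rpow (ENNReal.ofReal_le_ofReal hah) hp0.le
    exact step1 ▸ (step2.trans step3)
  have hint_le : (∫⁻ t in Set.Ioi (0:ℝ), ENNReal.ofReal (|f t - g t| ^ p))
      ≤ ENNReal.ofReal M ^ p * ENNReal.ofReal ε :=
    le_trans (setLIntegral_mono' measurableSet_Ioi hpt)
      (key_shift Φ hΦa _ hCfin hΦb ε hε)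
  calc (∫⁻ t in Set.Ioi (0:ℝ), ENNReal.ofReal (|f t - g t| ^ p)) ^ (1 / p)
      ≤ (ENNReal.ofReal M ^ p * ENNReal.ofReal ε) ^ (1 / p) :=
        ENNReal.rpow_le_rpow hint_le (by positivity)
    _ = ENNReal.ofReal M * ENNReal.ofReal ε ^ (1 / p) := by
        rw [ENNReal.mul_rpow_of_nonneg _ _ (by positivity), ← ENNReal.rpow_mul,
          mul_one_div_cancel hp0.ne', ENNReal.rpow_one]
end

section
/- Let C be a regular contour. Then C is closed: for every a < b in [0,∞], the set {ε ∈ [0,∞) | C(a,ε) ≥ b} is closed in [0,∞). More precisely, if a < b < ∞ then {ε | C(a,ε) ≥ b} = {ε | ε ≥ C(a,-)⁻¹(b)}, and if a < b = ∞ then the set is empty. -/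
open scoped NNReal ENNReal

/-- A regular contour is closed: for `a < b` in `[0,∞]`, the set
`{ε | C(a,ε) ≥ b}` is closed in `[0,∞)`.  More precisely, if `b < ∞` then this set
equals `{ε | ε ≥ C(a,-)⁻¹(b)} = Ici t` where `C(a,t) = b`, and if `b = ∞` it is empty. -/
theorem stmt9 (C : ℝ≥0∞ → ℝ≥0 → ℝ≥0∞)
    (hmono : ∀ (a b : ℝ≥0∞) (ε τ : ℝ≥0), a ≤ b → ε ≤ τ → C a ε ≤ C b τ)
    (hle : ∀ (a : ℝ≥0∞) (ε : ℝ≥0), a ≤ C a ε)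
    (hsub : ∀ (a : ℝ≥0∞) (ε τ : ℝ≥0), C (C a ε) τ ≤ C a (ε + τ))
    -- regularity:
    (hreg1 : ∀ ε : ℝ≥0, Function.Injective fun a : ℝ≥0∞ => C a ε)
    (hreg2 : ∀ a : ℝ≥0, Function.Injective (C (a : ℝ≥0∞)))
    (hreg3 : ∀ a : ℝ≥0, Set.range (C (a : ℝ≥0∞)) = Set.Ico (a : ℝ≥0∞) ⊤) :
    ∀ (a : ℝ≥0) (b : ℝ≥0∞), (a : ℝ≥0∞) < b →
      IsClosed {ε : ℝ≥0 | b ≤ C (a : ℝ≥0∞) ε} ∧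
      (b = ⊤ → {ε : ℝ≥0 | b ≤ C (a : ℝ≥0∞) ε} = ∅) ∧
      (b ≠ ⊤ → ∃ t : ℝ≥0, C (a : ℝ≥0∞) t = b ∧
        {ε : ℝ≥0 | b ≤ C (a : ℝ≥0∞) ε} = Set.Ici t) := by
  intro a b hab
  have hlt : ∀ ε : ℝ≥0, C (a : ℝ≥0∞) ε < ⊤ := by
    intro ε
    have : C (a : ℝ≥0∞) ε ∈ Set.range (C (a : ℝ≥0∞)) := ⟨ε, rfl⟩
    rw [hreg3 a] at this
    exact this.2
  by_cases hb : b = ⊤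
  · have hempty : {ε : ℝ≥0 | b ≤ C (a : ℝ≥0∞) ε} = ∅ := by
      ext ε
      simp only [Set.mem_setOf_eq, Set.mem_empty_iff_false, iff_false]
      intro h
      exact absurd (le_antisymm le_top (hb ▸ h)) (hlt ε).ne
    refine ⟨hempty ▸ isClosed_empty, fun _ => hempty, fun h => absurd hb h⟩
  · have hbmem : b ∈ Set.range (C (a : ℝ≥0∞)) := by
      rw [hreg3 a]; exact ⟨hab.le, lt_top_iff_ne_top.2 hb⟩
    obtain ⟨t, ht⟩ := hbmem
    have hIci : {ε : ℝ≥0 | b ≤ C (a : ℝ≥0∞) ε} = Set.Ici t := by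
      ext ε
      simp only [Set.mem_setOf_eq, Set.mem_Ici]
      constructor
      · intro h
        by_contra hlt'
        push_neg at hlt'
        have h1 : C (a : ℝ≥0∞) ε ≤ C (a : ℝ≥0∞) t := hmono _ _ _ _ le_rfl hlt'.le
        have : C (a : ℝ≥0∞) ε = b := le_antisymm (ht ▸ h1) h
        exact hlt'.ne (hreg2 a (this.trans ht.symm))
      · intro h
        calc b = C (a : ℝ≥0∞) t := ht.symm
        _ ≤ C (a : ℝ≥0∞) ε := hmono _ _ _ _ le_rfl h
    exact ⟨hIci ▸ isClosed_Ici, fun h => absurd h hb, fun _ => ⟨t, ht, hIci⟩⟩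
end
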